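/- If two nonconstant polynomial functions f, g : ℝ → ℝ are Lipschitz equivalent, then they have the same number of critical points. -/

import Mathlib

/-- A bi-Lipschitz homeomorphism of ℝ: a bijection with two-sided Lipschitz bounds. -/
def BiLipschitz (φ : ℝ → ℝ) : Prop :=
  Function.Bijective φ ∧ ∃ A B : ℝ, 0 < A ∧ 0 < B ∧
    ∀ s t : ℝ, A * |s - t| ≤ |φ s - φ t| ∧ |φ s - φ t| ≤ B * |s - t|

/-- Two polynomial functions are Lipschitz equivalent if g ∘ φ = c·f for some
bi-Lipschitz homeomorphism φ of ℝ and some constant c > 0. -/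
def LipEquivPoly (p q : Polynomial ℝ) : Prop :=
  ∃ φ : ℝ → ℝ, BiLipschitz φ ∧ ∃ c : ℝ, 0 < c ∧ ∀ t : ℝ, q.eval (φ t) = c * p.eval t

/-!
A bi-Lipschitz map `φ` moves points neither much faster nor much slower than the identity, so
composing with `φ` or with its inverse preserves the property of having a vanishing first-order
term: `g'(φ t) = 0` forces `(g ∘ φ)'(t) = 0`, and symmetrically through `φ⁻¹`. Hence `φ` maps the
critical points of `f` bijectively onto those of `g` whenever `g ∘ φ = c • f` with `c ≠ 0`.
-/

open Asymptotics Filter Polynomial Topology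

open scoped NNReal

section FlatComposition

variable {𝕜 : Type*} [NontriviallyNormedField 𝕜]
  {E F G : Type*} [NormedAddCommGroup E] [NormedSpace 𝕜 E] [NormedAddCommGroup F]
  [NormedSpace 𝕜 F] [NormedAddCommGroup G] [NormedSpace 𝕜 G]

theorem HasFDerivAt.comp_lipschitzWith_of_eq_zero {g : F → G} {φ : E → F} {K : ℝ≥0} {x : E}
    (hg : HasFDerivAt g (0 : F →L[𝕜] G) (φ x)) (hφ : LipschitzWith K φ) :
    HasFDerivAt (g ∘ φ) (0 : E →L[𝕜] G) x := by
  have hg_flat : (fun y => g y - g (φ x)) =o[𝓝 (φ x)] fun y => y - φ x := by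
    simpa using hg.isLittleO
  have hφ_sub : (fun x' => φ x' - φ x) =O[𝓝 x] fun x' => x' - x :=
    IsBigO.of_bound K (Eventually.of_forall fun x' => by
      simpa [dist_eq_norm] using hφ.dist_le_mul x' x)
  refine HasFDerivAt.of_isLittleO ?_
  simpa [Function.comp_def] using
    (hg_flat.comp_tendsto (hφ.continuous.tendsto x)).trans_isBigO hφ_sub

theorem HasDerivAt.eq_zero_of_comp_lipschitzWith {f g : 𝕜 → F} {f' : F} {φ : 𝕜 → 𝕜} {K : ℝ≥0}
    {c : 𝕜} {x : 𝕜} (hf : HasDerivAt f f' x) (hg : HasDerivAt g 0 (φ x))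
    (hφ : LipschitzWith K φ) (hc : c ≠ 0) (hgφ : g ∘ φ = c • f) : f' = 0 := by
  have hg' : HasFDerivAt g (0 : 𝕜 →L[𝕜] F) (φ x) := by
    simpa using hg.hasFDerivAt
  have hgφ' : HasDerivAt (g ∘ φ) 0 x := by
    simpa using (hg'.comp_lipschitzWith_of_eq_zero hφ).hasDerivAt
  rw [hgφ] at hgφ'
  exact (smul_eq_zero.mp ((hf.const_smul c).unique hgφ')).resolve_left hc

end FlatComposition

namespace BiLipschitz

variable {φ : ℝ → ℝ}

theorem exists_lipschitzWith (hφ : BiLipschitz φ) : ∃ K, LipschitzWith K φ := by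
  obtain ⟨-, _, B, -, hB, hbound⟩ := hφ
  refine ⟨B.toNNReal, LipschitzWith.of_dist_le_mul fun s t => ?_⟩
  rw [Real.dist_eq, Real.dist_eq, Real.coe_toNNReal _ hB.le]
  exact (hbound s t).2

theorem exists_antilipschitzWith (hφ : BiLipschitz φ) : ∃ K, AntilipschitzWith K φ := by
  obtain ⟨-, A, _, hA, -, hbound⟩ := hφ
  refine ⟨A.toNNReal⁻¹, AntilipschitzWith.of_le_mul_dist fun s t => ?_⟩
  rw [Real.dist_eq, Real.dist_eq, NNReal.coe_inv, Real.coe_toNNReal _ hA.le, inv_mul_eq_div,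
    le_div_iff₀' hA]
  exact (hbound s t).1

end BiLipschitz

theorem stmt5_general (p q : Polynomial ℝ) (h : LipEquivPoly p q) :
    {t : ℝ | (Polynomial.derivative p).eval t = 0}.ncard =
      {t : ℝ | (Polynomial.derivative q).eval t = 0}.ncard := by
  obtain ⟨φ, hφ, c, hc, heq⟩ := h
  obtain ⟨hinj, hsurj⟩ := hφ.1
  obtain ⟨K, hK⟩ := hφ.exists_lipschitzWith
  obtain ⟨L, hL⟩ := hφ.exists_antilipschitzWith
  set ψ := Function.surjInv hsurj
  have hψφ : Function.LeftInverse ψ φ := Function.leftInverse_surjInv ⟨hinj, hsurj⟩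
  have hφψ : Function.RightInverse ψ φ := Function.rightInverse_surjInv hsurj
  have hqφ : (fun s => q.eval s) ∘ φ = c • fun t => p.eval t := funext heq
  have hpψ : (fun t => p.eval t) ∘ ψ = c⁻¹ • fun s => q.eval s := funext fun s => by
    simp only [Function.comp_apply, Pi.smul_apply, smul_eq_mul]
    rw [eq_inv_mul_iff_mul_eq₀ hc.ne', ← heq, hφψ s]
  have hcrit : {t | (derivative p).eval t = 0} = φ ⁻¹' {s | (derivative q).eval s = 0} := by
    ext t
    simp only [Set.mem_ofPred_eq, Set.mem_preimage]
    refine ⟨fun ht => ?_, fun ht => ?_⟩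
    · refine (q.hasDerivAt (φ t)).eq_zero_of_comp_lipschitzWith ?_ (hL.to_rightInverse hφψ)
        (inv_ne_zero hc.ne') hpψ
      rw [hψφ t]
      exact ht ▸ p.hasDerivAt t
    · exact (p.hasDerivAt t).eq_zero_of_comp_lipschitzWith (ht ▸ q.hasDerivAt (φ t)) hK
        hc.ne' hqφ
  rw [hcrit, Set.ncard_preimage_of_injective_subset_range hinj (by simp [hsurj.range_eq])]

/-- Lipschitz equivalent nonconstant polynomial functions have the same number of
critical points. -/
theorem stmt5 (p q : Polynomial ℝ) (hp : 0 < p.natDegree) (hq : 0 < q.natDegree)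
    (h : LipEquivPoly p q) :
    {t : ℝ | (Polynomial.derivative p).eval t = 0}.ncard =
      {t : ℝ | (Polynomial.derivative q).eval t = 0}.ncard :=
  stmt5_general p q h
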